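/- Let M be a loopless matroid on a finite nonempty ground set E, and let ℓ* be the ideal relative loads arising from any Φ-decomposition of M. Then 1 / (max_{e∈E} ℓ*(e)) = Φ_M. -/

import Mathlib

open Set Matroid

variable {α : Type*}

/-- The rank of a set `A` in a matroid `M`: the size of a largest independent subset of `A`. -/
noncomputable def mrk (M : Matroid α) (A : Set α) : ℕ :=
  sSup {n : ℕ | ∃ I, M.Indep I ∧ I ⊆ A ∧ I.ncard = n}

/-- The total weight of a set of elements. -/
noncomputable def wSum (w : α → ℝ) (S : Set α) : ℝ := ∑ᶠ e ∈ S, w e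

/-- `B` is a minimum-weight base of `M` with respect to the weights `w`. -/
def IsMinWeightBase (M : Matroid α) (w : α → ℝ) (B : Set α) : Prop :=
  M.IsBase B ∧ ∀ B', M.IsBase B' → wSum w B ≤ wSum w B'

/-- A circuit: an inclusion-wise minimal dependent set. -/
def IsCircuit (M : Matroid α) (C : Set α) : Prop :=
  C ⊆ M.E ∧ ¬ M.Indep C ∧ ∀ x ∈ C, M.Indep (C \ {x})

/-- The fractional base packing number `Φ_M`. -/
noncomputable def PhiM (M : Matroid α) : ℝ :=
  sInf {x : ℝ | ∃ A ⊆ M.E, mrk M (M.E \ A) < mrk M M.E ∧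
    x = (A.ncard : ℝ) / ((mrk M M.E : ℝ) - (mrk M (M.E \ A) : ℝ))}

/-- `A` attains the fractional packing number of `M`. -/
def AttainsPhi (M : Matroid α) (A : Set α) : Prop :=
  A ⊆ M.E ∧ mrk M (M.E \ A) < mrk M M.E ∧
    (A.ncard : ℝ) / ((mrk M M.E : ℝ) - (mrk M (M.E \ A) : ℝ)) = PhiM M

/-- The fractional base covering number `β_M`. -/
noncomputable def BetaM (M : Matroid α) : ℝ :=
  sSup {x : ℝ | ∃ A ⊆ M.E, A.Nonempty ∧ x = (A.ncard : ℝ) / (mrk M A : ℝ)}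

/-- The relative load of an element `e` in a base collection `Bs` of size `k`. -/
noncomputable def relLoad {k : ℕ} (Bs : Fin k → Set α) (e : α) : ℝ :=
  (({i | e ∈ Bs i} : Set (Fin k)).ncard : ℝ) / (k : ℝ)

/-!
Along a Φ-decomposition the packing numbers `Φ_{M|E_i}` never decrease: if `A` attains `Φ_N` and
`B` is any set whose removal drops the rank of `N \ A`, then `A ∪ B` is a competitor for `Φ_N`,
and subtracting the equality `|A| = Φ_N (rk N − rk (N \ A))` from the resulting inequality
leaves `|B| ≥ Φ_N (rk (N \ A) − rk (N \ (A ∪ B)))`. Hence every ideal load is at most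
`1 / Φ_M`, and this value is taken on the first layer `E_0 \ E_1`.
-/

lemma le_div_of_le_add_div_add {Φ a b d₁ d₂ : ℝ} (hd₁ : 0 < d₁) (hd₂ : 0 < d₂)
    (ha : a / d₁ = Φ) (hab : Φ ≤ (a + b) / (d₁ + d₂)) : Φ ≤ b / d₂ := by
  rw [div_eq_iff hd₁.ne'] at ha
  rw [le_div_iff₀ (by positivity)] at hab
  rw [le_div_iff₀ hd₂]
  linarith

lemma exists_mem_diff_succ {S : ℕ → Set α} {e : α} {k : ℕ} (h0 : e ∈ S 0) (hk : e ∉ S k) :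
    ∃ i < k, e ∈ S i \ S (i + 1) := by
  induction k with
  | zero => exact absurd h0 hk
  | succ n ih =>
    by_cases hn : e ∈ S n
    · exact ⟨n, n.lt_succ_self, hn, hk⟩
    · obtain ⟨i, hi, he⟩ := ih hn
      exact ⟨i, hi.trans n.lt_succ_self, he⟩

section Rank

variable {M : Matroid α} {X Y : Set α}

lemma mrk_empty (M : Matroid α) : mrk M ∅ = 0 := by
  refine Nat.eq_zero_of_le_zero (csSup_le ⟨0, ∅, M.empty_indep, subset_rfl, ncard_empty α⟩ ?_)
  rintro n ⟨I, -, hI, rfl⟩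
  simp [subset_empty_iff.mp hI]

lemma mrk_restrict (h : Y ⊆ X) : mrk (M ↾ X) Y = mrk M Y := by
  unfold mrk
  congr! 3 with n
  refine exists_congr fun I ↦ ?_
  rw [restrict_indep_iff]
  exact ⟨fun ⟨⟨hI, _⟩, hIY, hn⟩ ↦ ⟨hI, hIY, hn⟩, fun ⟨hI, hIY, hn⟩ ↦ ⟨⟨hI, hIY.trans h⟩, hIY, hn⟩⟩

end Rank

section Packing

variable {M : Matroid α} {A : Set α}

lemma phiM_le (hA : A ⊆ M.E) (hlt : mrk M (M.E \ A) < mrk M M.E) :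
    PhiM M ≤ A.ncard / ((mrk M M.E : ℝ) - mrk M (M.E \ A)) := by
  refine csInf_le ⟨0, ?_⟩ ⟨A, hA, hlt, rfl⟩
  rintro x ⟨B, -, hB, rfl⟩
  have : (mrk M (M.E \ B) : ℝ) < mrk M M.E := by exact_mod_cast hB
  exact div_nonneg (Nat.cast_nonneg _) (by linarith)

lemma le_phiM {x : ℝ} (hM : 0 < mrk M M.E)
    (h : ∀ A ⊆ M.E, mrk M (M.E \ A) < mrk M M.E →
      x ≤ A.ncard / ((mrk M M.E : ℝ) - mrk M (M.E \ A))) :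
    x ≤ PhiM M := by
  refine le_csInf ⟨_, M.E, subset_rfl, ?_, rfl⟩ ?_
  · rwa [sdiff_self, mrk_empty]
  · rintro _ ⟨A, hA, hlt, rfl⟩
    exact h A hA hlt

lemma AttainsPhi.mrk_pos (hA : AttainsPhi M A) : 0 < mrk M M.E :=
  Nat.zero_lt_of_lt hA.2.1

lemma AttainsPhi.nonempty (hA : AttainsPhi M A) : A.Nonempty := by
  rw [nonempty_iff_ne_empty]
  rintro rfl
  exact (hA.2.1.trans_eq (by rw [sdiff_empty])).false

lemma AttainsPhi.phiM_pos (hA : AttainsPhi M A) (hfin : A.Finite) : 0 < PhiM M := by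
  have hA₀ := hA.nonempty
  obtain ⟨-, hlt, hΦ⟩ := hA
  have : (mrk M (M.E \ A) : ℝ) < mrk M M.E := by exact_mod_cast hlt
  rw [← hΦ]
  exact div_pos (by exact_mod_cast (ncard_pos hfin).mpr hA₀) (by linarith)

lemma AttainsPhi.phiM_le_phiM_restrict_diff (hA : AttainsPhi M A) (hfin : M.E.Finite)
    (hY : 0 < mrk M (M.E \ A)) : PhiM M ≤ PhiM (M ↾ (M.E \ A)) := by
  obtain ⟨hAE, hAlt, hΦ⟩ := hA
  set Y := M.E \ A
  refine le_phiM (by rwa [restrict_ground_eq, mrk_restrict subset_rfl]) ?_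
  intro B hBY hBlt
  rw [restrict_ground_eq] at hBY hBlt ⊢
  rw [mrk_restrict subset_rfl, mrk_restrict sdiff_subset] at hBlt ⊢
  have hAB : A ∪ B ⊆ M.E := union_subset hAE (hBY.trans sdiff_subset)
  have hcompl : M.E \ (A ∪ B) = Y \ B := by rw [sdiff_sdiff]
  have hcard : (A ∪ B).ncard = A.ncard + B.ncard :=
    ncard_union_eq (disjoint_of_subset_right hBY disjoint_sdiff_right)
      (hfin.subset hAE) (hfin.subset (hBY.trans sdiff_subset))
  have hABlt : mrk M (M.E \ (A ∪ B)) < mrk M M.E := by rw [hcompl]; exact hBlt.trans hAlt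
  have hcompete := phiM_le hAB hABlt
  rw [hcompl, hcard, Nat.cast_add] at hcompete
  refine le_div_of_le_add_div_add (d₁ := (mrk M M.E : ℝ) - mrk M Y)
    (by simpa using (Nat.cast_lt (α := ℝ)).mpr hAlt)
    (by simpa using (Nat.cast_lt (α := ℝ)).mpr hBlt) hΦ ?_
  rwa [sub_add_sub_cancel]

end Packing

lemma phiM_le_phiM_restrict_of_chain {M : Matroid α} (hfin : M.E.Finite) {k : ℕ}
    {Es : ℕ → Set α} (h0 : Es 0 = M.E) (hss : ∀ i < k, Es (i + 1) ⊂ Es i)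
    (hatt : ∀ i < k, AttainsPhi (M ↾ Es i) (Es i \ Es (i + 1))) :
    ∀ i < k, Es i ⊆ M.E ∧ PhiM M ≤ PhiM (M ↾ Es i) := by
  intro i
  induction i with
  | zero => intro _; simp [h0]
  | succ n ih =>
    intro hn1
    have hn : n < k := n.lt_succ_self.trans hn1
    obtain ⟨hsub, hle⟩ := ih hn
    have hsucc := (hss n hn).subset
    have hrestrict : (M ↾ Es n) ↾ ((M ↾ Es n).E \ (Es n \ Es (n + 1))) = M ↾ Es (n + 1) := by
      rw [restrict_ground_eq, sdiff_sdiff_cancel_left hsucc, restrict_restrict_eq _ hsucc]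
    refine ⟨hsucc.trans hsub, hle.trans ?_⟩
    rw [← hrestrict]
    refine (hatt n hn).phiM_le_phiM_restrict_diff (hfin.subset hsub) ?_
    rw [restrict_ground_eq, sdiff_sdiff_cancel_left hsucc, mrk_restrict hsucc]
    simpa [mrk_restrict] using (hatt (n + 1) hn1).mrk_pos

theorem stmt_7_general (M : Matroid α) (hfin : M.E.Finite) (hne : M.E.Nonempty)
    (k : ℕ) (Es : ℕ → Set α) (h0 : Es 0 = M.E) (hk : Es k = ∅)
    (hss : ∀ i < k, Es (i + 1) ⊂ Es i)
    (hatt : ∀ i < k, AttainsPhi (M ↾ Es i) (Es i \ Es (i + 1)))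
    (lstar : α → ℝ)
    (hl : ∀ i < k, ∀ e ∈ Es i \ Es (i + 1), lstar e = 1 / PhiM (M ↾ Es i)) :
    1 / sSup (lstar '' M.E) = PhiM M := by
  have hk0 : 0 < k := Nat.pos_of_ne_zero (by rintro rfl; exact hne.ne_empty (h0 ▸ hk))
  have hM0 : M ↾ Es 0 = M := by rw [h0, restrict_ground_eq_self]
  have hΦ : 0 < PhiM M := hM0 ▸ (hatt 0 hk0).phiM_pos (hfin.subset (h0 ▸ sdiff_subset))
  have hmono := phiM_le_phiM_restrict_of_chain hfin h0 hss hatt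
  have hbound : ∀ e ∈ M.E, lstar e ≤ 1 / PhiM M := by
    intro e he
    obtain ⟨i, hi, hei⟩ := exists_mem_diff_succ (S := Es) (h0 ▸ he) (hk ▸ notMem_empty e)
    rw [hl i hi e hei]
    exact one_div_le_one_div_of_le hΦ (hmono i hi).2
  obtain ⟨e₀, he₀⟩ := (hatt 0 hk0).nonempty
  have hmax : IsGreatest (lstar '' M.E) (1 / PhiM M) :=
    ⟨⟨e₀, h0 ▸ he₀.1, by rw [hl 0 hk0 e₀ he₀, hM0]⟩, forall_mem_image.2 hbound⟩
  rw [hmax.csSup_eq, one_div_one_div]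

/-- The reciprocal of the maximum ideal relative load (arising from any Φ-decomposition)
equals `Φ_M`. -/
theorem stmt_7 (M : Matroid α) (hfin : M.E.Finite) (hne : M.E.Nonempty)
    (hloopless : ∀ e ∈ M.E, M.Indep {e})
    (k : ℕ) (Es : ℕ → Set α) (h0 : Es 0 = M.E) (hk : Es k = ∅)
    (hss : ∀ i < k, Es (i + 1) ⊂ Es i)
    (hatt : ∀ i < k, AttainsPhi (M ↾ Es i) (Es i \ Es (i + 1)))
    (lstar : α → ℝ)
    (hl : ∀ i < k, ∀ e ∈ Es i \ Es (i + 1), lstar e = 1 / PhiM (M ↾ Es i)) :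
    1 / sSup (lstar '' M.E) = PhiM M :=
  stmt_7_general M hfin hne k Es h0 hk hss hatt lstar hl
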